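/- Let ψ : ℝ → ℂ be a Schwartz function whose Fourier transform ψ̂ is supported in [1−Δ, 1+Δ] with 0 < Δ < 1/3. Let s : ℝ → ℝ be a continuous 2π-periodic function with Fourier expansion s(t) = Σ_{k∈ℤ} ŝ(k)·e^{ikt}, where Σ_{k∈ℤ} (1+|k|)·|ŝ(k)| < ∞. Let A : ℝ → ℝ be C¹, bounded and positive, φ : ℝ → ℝ be C² with c₁ ≤ φ'(t) ≤ M₂ for all t (0 < c₁ ≤ M₂), |A'(t)| ≤ ε·φ'(t) and |φ''(t)| ≤ ε·φ'(t) for all t, and set f(t) = A(t)·s(2πφ(t)). Then for every b ∈ ℝ and every scale a in the first-harmonic band (1−Δ)/φ'(b) ≤ a ≤ (1+Δ)/φ'(b), | W_f(a,b) − ŝ(1)·A(b)·exp(2πiφ(b))·a^{1/2}·conj(ψ̂(aφ'(b))) | ≤ ε·M₂·a^{3/2}·Σ_{k∈ℤ} |ŝ(k)|·( I₁ + π·|k|·‖A‖∞·a·I₂ ). That is, for signals with a general shape function (as in the model of the respiratory signal), the wavelet transform on the first-harmonic scale band is given by the first Fourier mode of the shape function, up to an O(ε) error. -/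

import Mathlib

/-!
Expanding the shape function in its Fourier series writes `f` as a sum of harmonics
`ŝ(k) A(t) e^{2πikφ(t)}`, which may be integrated term by term. Near `t = b` each harmonic is close
to the pure wave `ŝ(k) A(b) e^{2πik(φ(b) + φ'(b)(t - b))}`: the amplitude error is at most
`ε M₂ |t - b|` by the mean value theorem, the phase error at most `π |k| ε M₂ (t - b)²` by Taylor's
theorem, and integrating both against `|ψ((t - b)/a)|` produces the moments `I₁`, `I₂`. The wavelet
transform of the pure wave is `a^{1/2} ŝ(k) A(b) e^{2πikφ(b)} conj (ψ̂(a k φ'(b)))`, and on the band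
`a φ'(b) ∈ [1 - Δ, 1 + Δ]` with `Δ < 1/3` only `k = 1` puts `a k φ'(b)` into the support of `ψ̂`.
-/

open MeasureTheory

/-- The continuous wavelet transform
`W_f(a,b) = a^{-1/2} ∫ f(t) conj(ψ((t-b)/a)) dt`. -/
noncomputable def CWT (ψ f : ℝ → ℂ) (a b : ℝ) : ℂ :=
  ((Real.sqrt a : ℝ) : ℂ)⁻¹ * ∫ t : ℝ, f t * (starRingEnd ℂ) (ψ ((t - b) / a))

open scoped Real ComplexConjugate FourierTransform

noncomputable def absMoment (ψ : ℝ → ℂ) (n : ℕ) : ℝ := ∫ x, |x| ^ n * ‖ψ x‖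

theorem absMoment_nonneg (ψ : ℝ → ℂ) (n : ℕ) : 0 ≤ absMoment ψ n :=
  integral_nonneg fun x => by positivity

theorem abs_sub_sub_deriv_mul_le_of_abs_deriv_deriv_le {f : ℝ → ℝ} (hf : ContDiff ℝ 2 f) {C : ℝ}
    (hC : ∀ x, |deriv (deriv f) x| ≤ C) (x₀ x : ℝ) :
    |f x - f x₀ - deriv f x₀ * (x - x₀)| ≤ C / 2 * (x - x₀) ^ 2 := by
  rcases eq_or_ne x₀ x with rfl | hx
  · simp
  obtain ⟨y, -, hy⟩ := taylor_mean_remainder_lagrange_iteratedDeriv (n := 1) hx hf.contDiffOn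
  have hderiv : derivWithin f (Set.uIcc x₀ x) x₀ = deriv f x₀ :=
    ((hf.differentiable (by norm_num)) x₀).derivWithin
      (uniqueDiffOn_uIcc hx x₀ Set.left_mem_uIcc)
  rw [taylor_within_apply] at hy
  simp only [Finset.sum_range_succ, Finset.sum_range_zero, iteratedDerivWithin_zero,
    iteratedDerivWithin_one, hderiv, iteratedDeriv_succ, iteratedDeriv_zero] at hy
  norm_num [smul_eq_mul] at hy
  rw [show f x - f x₀ - deriv f x₀ * (x - x₀) = deriv (deriv f) y * (x - x₀) ^ 2 / 2 by
    rw [← hy]; ring, abs_div, abs_mul, abs_two, abs_of_nonneg (sq_nonneg (x - x₀))]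
  linarith [mul_le_mul_of_nonneg_right (hC y) (sq_nonneg (x - x₀))]

theorem norm_exp_two_pi_I_mul (x : ℝ) : ‖Complex.exp (2 * π * Complex.I * x)‖ = 1 := by
  simp [Complex.norm_exp]

theorem norm_exp_two_pi_I_mul_sub_le (x y : ℝ) :
    ‖Complex.exp (2 * π * Complex.I * x) - Complex.exp (2 * π * Complex.I * y)‖ ≤
      2 * π * |x - y| := by
  have hfactor : Complex.exp (2 * π * Complex.I * x) - Complex.exp (2 * π * Complex.I * y) =
      Complex.exp (2 * π * Complex.I * y) *
        (Complex.exp (Complex.I * (2 * π * (x - y) : ℝ)) - 1) := by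
    rw [mul_sub, ← Complex.exp_add]; push_cast; ring_nf
  rw [hfactor, norm_mul, norm_exp_two_pi_I_mul, one_mul]
  refine Real.norm_exp_I_mul_ofReal_sub_one_le.trans_eq ?_
  rw [Real.norm_eq_abs, abs_mul, abs_of_pos Real.two_pi_pos]

theorem norm_mul_exp_sub_mul_exp_linearization_le {A φ : ℝ → ℝ} {α β : ℝ}
    (hA : Differentiable ℝ A) (hA' : ∀ t, |deriv A t| ≤ α) (hφ : ContDiff ℝ 2 φ)
    (hφ'' : ∀ t, |deriv (deriv φ) t| ≤ β) (b t : ℝ) :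
    ‖A t * Complex.exp (2 * π * Complex.I * φ t) -
        A b * Complex.exp (2 * π * Complex.I * ↑(φ b + deriv φ b * (t - b)))‖ ≤
      α * |t - b| + π * |A b| * β * (t - b) ^ 2 := by
  have hamp : |A t - A b| ≤ α * |t - b| := by
    simpa only [Real.norm_eq_abs] using Convex.norm_image_sub_le_of_norm_deriv_le
      (fun x _ => hA x) (fun x _ => hA' x) convex_univ (Set.mem_univ b) (Set.mem_univ t)
  have hphase : ‖Complex.exp (2 * π * Complex.I * φ t) -
      Complex.exp (2 * π * Complex.I * ↑(φ b + deriv φ b * (t - b)))‖ ≤ π * β * (t - b) ^ 2 := by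
    calc _ ≤ 2 * π * |φ t - φ b - deriv φ b * (t - b)| := by
          simpa [sub_add_eq_sub_sub] using
            norm_exp_two_pi_I_mul_sub_le (φ t) (φ b + deriv φ b * (t - b))
      _ ≤ 2 * π * (β / 2 * (t - b) ^ 2) := by
          gcongr; exact abs_sub_sub_deriv_mul_le_of_abs_deriv_deriv_le hφ hφ'' b t
      _ = π * β * (t - b) ^ 2 := by ring
  calc _ = ‖((A t - A b : ℝ) : ℂ) * Complex.exp (2 * π * Complex.I * φ t) +
        (A b : ℂ) * (Complex.exp (2 * π * Complex.I * φ t) -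
          Complex.exp (2 * π * Complex.I * ↑(φ b + deriv φ b * (t - b))))‖ := by
        push_cast; ring_nf
    _ ≤ |A t - A b| + |A b| * (π * β * (t - b) ^ 2) := by
        refine (norm_add_le _ _).trans ?_
        rw [norm_mul, norm_mul, Complex.norm_real, Complex.norm_real, Real.norm_eq_abs,
          Real.norm_eq_abs, norm_exp_two_pi_I_mul, mul_one]
        gcongr
    _ ≤ α * |t - b| + π * |A b| * β * (t - b) ^ 2 := by linarith

theorem MeasureTheory.Integrable.comp_sub_div {E : Type*} [NormedAddCommGroup E] {g : ℝ → E}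
    (hg : Integrable g) {a : ℝ} (ha : a ≠ 0) (b : ℝ) :
    Integrable fun t => g ((t - b) / a) :=
  (hg.comp_div ha).comp_sub_right b

theorem integral_comp_sub_div_of_pos {E : Type*} [NormedAddCommGroup E] [NormedSpace ℝ E]
    (g : ℝ → E) {a : ℝ} (ha : 0 < a) (b : ℝ) :
    ∫ t, g ((t - b) / a) = a • ∫ x, g x := by
  rw [integral_sub_right_eq_self (fun t => g (t / a)) b, Measure.integral_comp_div g a,
    abs_of_pos ha]

theorem abs_sub_pow_mul_comp_sub_div_eq (g : ℝ → ℝ) (n : ℕ) {a : ℝ} (ha : 0 < a) (b t : ℝ) :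
    |t - b| ^ n * g ((t - b) / a) = a ^ n * (|(t - b) / a| ^ n * g ((t - b) / a)) := by
  rw [abs_div, abs_of_pos ha, div_pow, ← mul_assoc, mul_div_cancel₀ _ (by positivity)]

theorem MeasureTheory.Integrable.abs_sub_pow_mul_comp_sub_div {g : ℝ → ℝ} {n : ℕ}
    (hg : Integrable fun x => |x| ^ n * g x) {a : ℝ} (ha : 0 < a) (b : ℝ) :
    Integrable fun t => |t - b| ^ n * g ((t - b) / a) := by
  simp_rw [abs_sub_pow_mul_comp_sub_div_eq g n ha b]
  exact (hg.comp_sub_div ha.ne' b).const_mul _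

theorem integral_abs_sub_pow_mul_comp_sub_div (g : ℝ → ℝ) (n : ℕ) {a : ℝ} (ha : 0 < a) (b : ℝ) :
    ∫ t, |t - b| ^ n * g ((t - b) / a) = a ^ (n + 1) * ∫ x, |x| ^ n * g x := by
  simp_rw [abs_sub_pow_mul_comp_sub_div_eq g n ha b, integral_const_mul,
    integral_comp_sub_div_of_pos (fun x => |x| ^ n * g x) ha b, smul_eq_mul]
  ring

theorem conj_fourier_eq_integral (ψ : ℝ → ℂ) (w : ℝ) :
    conj (𝓕 ψ w) = ∫ v : ℝ, Complex.exp (2 * π * Complex.I * w * v) * conj (ψ v) := by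
  rw [Real.fourier_real_eq_integral_exp_smul, ← integral_conj]
  congr 1
  funext v
  rw [smul_eq_mul, map_mul, ← Complex.exp_conj]
  congr 2
  simp only [map_mul, Complex.conj_ofReal, Complex.conj_I]
  push_cast
  ring

theorem integral_exp_linear_phase_mul_conj_comp_sub_div (ψ : ℝ → ℂ) {a : ℝ} (ha : 0 < a)
    (b θ ω : ℝ) :
    ∫ t : ℝ, Complex.exp (2 * π * Complex.I * ↑(θ + ω * (t - b))) * conj (ψ ((t - b) / a)) =
      a * Complex.exp (2 * π * Complex.I * θ) * conj (𝓕 ψ (a * ω)) := by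
  have hsplit : ∀ t : ℝ,
      Complex.exp (2 * π * Complex.I * ↑(θ + ω * (t - b))) * conj (ψ ((t - b) / a)) =
        Complex.exp (2 * π * Complex.I * θ) * (Complex.exp (2 * π * Complex.I * ↑(a * ω) *
          ↑((t - b) / a)) * conj (ψ ((t - b) / a))) := fun t => by
    rw [← mul_assoc, ← Complex.exp_add]
    congr 2
    push_cast
    field_simp [ha.ne']
  simp_rw [hsplit, integral_const_mul, conj_fourier_eq_integral,
    integral_comp_sub_div_of_pos
      (fun v : ℝ => Complex.exp (2 * π * Complex.I * ↑(a * ω) * v) * conj (ψ v)) ha b,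
    Complex.real_smul]
  ring

theorem norm_integral_sub_integral_le_of_norm_sub_le {α E : Type*} [MeasurableSpace α]
    {μ : Measure α} [NormedAddCommGroup E] [NormedSpace ℝ E] {F L : α → E} {D : α → ℝ}
    (hF : AEStronglyMeasurable F μ) (hL : Integrable L μ) (hD : Integrable D μ)
    (h : ∀ᵐ x ∂μ, ‖F x - L x‖ ≤ D x) :
    ‖∫ x, F x ∂μ - ∫ x, L x ∂μ‖ ≤ ∫ x, D x ∂μ := by
  have hFL : Integrable (fun x => F x - L x) μ := hD.mono' (hF.sub hL.aestronglyMeasurable) h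
  have hF_int : Integrable F μ := (hFL.add hL).congr (ae_of_all _ fun x => sub_add_cancel _ _)
  rw [← integral_sub hF_int hL]
  exact norm_integral_le_of_norm_le hD h

theorem hasSum_mul_integral_of_summable_norm {α ι : Type*} [MeasurableSpace α] {μ : Measure α}
    [Countable ι] {c : ι → ℂ} (hc : Summable fun i => ‖c i‖) {e : ι → α → ℂ} {K : ℝ}
    (he : ∀ i, AEStronglyMeasurable (e i) μ) (heK : ∀ i x, ‖e i x‖ ≤ K) {g : α → ℂ}
    (hg : Integrable g μ) :
    HasSum (fun i => c i * ∫ x, e i x * g x ∂μ) (∫ x, (∑' i, c i * e i x) * g x ∂μ) := by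
  have hint : ∀ i, Integrable (fun x => c i * e i x * g x) μ := fun i =>
    hg.bdd_mul ((he i).const_mul (c i)) (ae_of_all _ fun x => by
      rw [norm_mul]; exact mul_le_mul_of_nonneg_left (heK i x) (norm_nonneg _))
  have hnorm : ∀ i, ∫ x, ‖c i * e i x * g x‖ ∂μ ≤ ‖c i‖ * (K * ∫ x, ‖g x‖ ∂μ) := fun i => by
    rw [← integral_const_mul, ← integral_const_mul]
    refine integral_mono (hint i).norm ((hg.norm.const_mul _).const_mul _) fun x => ?_
    simp only [norm_mul, ← mul_assoc]
    gcongr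
    exact heK i x
  simp_rw [← tsum_mul_right, ← integral_const_mul, ← mul_assoc]
  exact hasSum_integral_of_summable_integral_norm hint <|
    (hc.mul_right _).of_nonneg_of_le (fun i => integral_nonneg fun x => norm_nonneg _) hnorm

theorem HasSum.norm_sub_tsum_le {ι E : Type*} [NormedAddCommGroup E] [CompleteSpace E]
    {X Y : ι → E} {x : E} {B : ι → ℝ} (hX : HasSum X x) (hB : Summable B)
    (h : ∀ i, ‖X i - Y i‖ ≤ B i) : ‖x - ∑' i, Y i‖ ≤ ∑' i, B i := by
  have hXY : Summable fun i => X i - Y i := .of_norm_bounded hB h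
  have hY : Summable Y := (hX.summable.sub hXY).congr fun i => sub_sub_cancel _ _
  rw [← hX.tsum_eq, ← hX.summable.tsum_sub hY]
  exact tsum_of_norm_bounded hB.hasSum h

theorem norm_integral_mul_exp_mul_conj_sub_le {ψ : ℝ → ℂ} (hψ : Integrable ψ)
    (hψm : ∀ n ≤ 2, Integrable fun x => |x| ^ n * ‖ψ x‖)
    {A φ : ℝ → ℝ} {α β : ℝ} (hA : Differentiable ℝ A) (hA' : ∀ t, |deriv A t| ≤ α)
    (hφ : ContDiff ℝ 2 φ) (hφ'' : ∀ t, |deriv (deriv φ) t| ≤ β) {a : ℝ} (ha : 0 < a) (b : ℝ) :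
    ‖(∫ t : ℝ, A t * Complex.exp (2 * π * Complex.I * φ t) * conj (ψ ((t - b) / a))) -
        a * A b * Complex.exp (2 * π * Complex.I * φ b) * conj (𝓕 ψ (a * deriv φ b))‖ ≤
      a ^ 2 * (α * absMoment ψ 1 + π * |A b| * β * a * absMoment ψ 2) := by
  set L : ℝ → ℂ := fun t =>
    A b * (Complex.exp (2 * π * Complex.I * ↑(φ b + deriv φ b * (t - b))) *
      conj (ψ ((t - b) / a)))
  set D : ℝ → ℝ := fun t =>
    α * (|t - b| ^ 1 * ‖ψ ((t - b) / a)‖) + π * |A b| * β * (|t - b| ^ 2 * ‖ψ ((t - b) / a)‖)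
  have hAc := hA.continuous
  have hφc := hφ.continuous
  have hψc : Integrable fun t => conj (ψ ((t - b) / a)) :=
    Complex.conjCLE.toContinuousLinearMap.integrable_comp (hψ.comp_sub_div ha.ne' b)
  have hL : Integrable L := by
    refine (hψc.bdd_mul (c := 1) (by fun_prop) (ae_of_all _ fun t => ?_)).const_mul _
    rw [norm_exp_two_pi_I_mul]
  have hD₁ := (hψm 1 (by norm_num)).abs_sub_pow_mul_comp_sub_div ha b
  have hD₂ := (hψm 2 le_rfl).abs_sub_pow_mul_comp_sub_div ha b
  have hFL : ∀ t, ‖A t * Complex.exp (2 * π * Complex.I * φ t) * conj (ψ ((t - b) / a)) - L t‖ ≤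
      D t := fun t => by
    calc _ = ‖A t * Complex.exp (2 * π * Complex.I * φ t) -
          A b * Complex.exp (2 * π * Complex.I * ↑(φ b + deriv φ b * (t - b)))‖ *
            ‖ψ ((t - b) / a)‖ := by
          simp only [L, ← mul_assoc, ← sub_mul, norm_mul, Complex.norm_conj]
      _ ≤ (α * |t - b| + π * |A b| * β * (t - b) ^ 2) * ‖ψ ((t - b) / a)‖ := by
          gcongr; exact norm_mul_exp_sub_mul_exp_linearization_le hA hA' hφ hφ'' b t
      _ = D t := by simp only [D, pow_one, sq_abs]; ring
  have hF_meas : AEStronglyMeasurable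
      (fun t => A t * Complex.exp (2 * π * Complex.I * φ t) * conj (ψ ((t - b) / a))) :=
    (by fun_prop : Continuous fun t => (A t : ℂ) * Complex.exp (2 * π * Complex.I * φ t))
      |>.aestronglyMeasurable.mul hψc.aestronglyMeasurable
  calc _ = ‖(∫ t : ℝ, A t * Complex.exp (2 * π * Complex.I * φ t) * conj (ψ ((t - b) / a))) -
        ∫ t, L t‖ := by
        rw [integral_const_mul, integral_exp_linear_phase_mul_conj_comp_sub_div ψ ha]
        congr 2
        ring
    _ ≤ ∫ t, D t :=
        norm_integral_sub_integral_le_of_norm_sub_le hF_meas hL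
          ((hD₁.const_mul _).add (hD₂.const_mul _)) (ae_of_all _ hFL)
    _ = _ := by
        rw [integral_add (hD₁.const_mul _) (hD₂.const_mul _), integral_const_mul,
          integral_const_mul, integral_abs_sub_pow_mul_comp_sub_div (‖ψ ·‖) 1 ha b,
          integral_abs_sub_pow_mul_comp_sub_div (‖ψ ·‖) 2 ha b, absMoment, absMoment]
        ring

theorem norm_integral_harmonic_mul_conj_sub_le {ψ : ℝ → ℂ} (hψ : Integrable ψ)
    (hψm : ∀ n ≤ 2, Integrable fun x => |x| ^ n * ‖ψ x‖) {A φ : ℝ → ℝ} {α β K : ℝ}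
    (hA : Differentiable ℝ A) (hA' : ∀ t, |deriv A t| ≤ α) (hφ : ContDiff ℝ 2 φ)
    (hφ'' : ∀ t, |deriv (deriv φ) t| ≤ β) {a : ℝ} (ha : 0 < a) {b : ℝ} (hK : |A b| ≤ K)
    (k : ℝ) :
    ‖(∫ t : ℝ, A t * Complex.exp (2 * π * Complex.I * ↑(k * φ t)) * conj (ψ ((t - b) / a))) -
        a * A b * Complex.exp (2 * π * Complex.I * ↑(k * φ b)) *
          conj (𝓕 ψ (a * (k * deriv φ b)))‖ ≤
      a ^ 2 * (α * absMoment ψ 1 + π * K * (|k| * β) * a * absMoment ψ 2) := by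
  have hβ : 0 ≤ β := (abs_nonneg _).trans (hφ'' 0)
  have hkφ'' : ∀ t, |deriv (deriv fun t => k * φ t) t| ≤ |k| * β := fun t => by
    simp only [deriv_const_mul_field', abs_mul]
    gcongr
    exact hφ'' t
  have hmode := norm_integral_mul_exp_mul_conj_sub_le hψ hψm hA hA' (contDiff_const.mul hφ)
    hkφ'' ha b
  simp only [deriv_const_mul_field'] at hmode
  refine hmode.trans ?_
  have := absMoment_nonneg ψ 2
  gcongr

theorem norm_integral_harmonicSeries_mul_conj_sub_le {ψ : ℝ → ℂ} (hψ : Integrable ψ)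
    (hψm : ∀ n ≤ 2, Integrable fun x => |x| ^ n * ‖ψ x‖) {c : ℤ → ℂ}
    (hc : Summable fun k : ℤ => (1 + |(k : ℝ)|) * ‖c k‖) {A φ : ℝ → ℝ} {α β K : ℝ}
    (hA : Differentiable ℝ A) (hAK : ∀ t, |A t| ≤ K) (hA' : ∀ t, |deriv A t| ≤ α)
    (hφ : ContDiff ℝ 2 φ) (hφ'' : ∀ t, |deriv (deriv φ) t| ≤ β) {a : ℝ} (ha : 0 < a) (b : ℝ) :
    ‖(∫ t : ℝ, (A t * ∑' k : ℤ, c k * Complex.exp (2 * π * Complex.I * ↑(k * φ t))) *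
          conj (ψ ((t - b) / a))) -
        ∑' k : ℤ, c k * (a * A b * Complex.exp (2 * π * Complex.I * ↑(k * φ b)) *
          conj (𝓕 ψ (a * (k * deriv φ b))))‖ ≤
      a ^ 2 * ∑' k : ℤ, ‖c k‖ *
        (α * absMoment ψ 1 + π * K * (|(k : ℝ)| * β) * a * absMoment ψ 2) := by
  have hc₀ : Summable fun k : ℤ => ‖c k‖ :=
    hc.of_nonneg_of_le (fun k => norm_nonneg _) fun k =>
      le_mul_of_one_le_left (norm_nonneg _) (le_add_of_nonneg_right (abs_nonneg _))
  have hc₁ : Summable fun k : ℤ => |(k : ℝ)| * ‖c k‖ :=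
    hc.of_nonneg_of_le (fun k => by positivity) fun k => by
      gcongr; exact le_add_of_nonneg_left zero_le_one
  have hAc := hA.continuous
  have hφc := hφ.continuous
  have hsignal : ∀ t, (A t : ℂ) * ∑' k : ℤ, c k * Complex.exp (2 * π * Complex.I * ↑(k * φ t)) =
      ∑' k : ℤ, c k * (A t * Complex.exp (2 * π * Complex.I * ↑(k * φ t))) := fun t => by
    rw [← tsum_mul_left]; congr 1 with k; ring
  have hψc : Integrable fun t => conj (ψ ((t - b) / a)) :=
    Complex.conjCLE.toContinuousLinearMap.integrable_comp (hψ.comp_sub_div ha.ne' b)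
  have hswap := hasSum_mul_integral_of_summable_norm hc₀
    (e := fun k t => A t * Complex.exp (2 * π * Complex.I * ↑(k * φ t))) (K := K)
    (fun k => by fun_prop) (fun k t => by
      rw [norm_mul, Complex.norm_real, Real.norm_eq_abs, norm_exp_two_pi_I_mul, mul_one]
      exact hAK t) hψc
  simp_rw [hsignal, ← tsum_mul_left]
  refine hswap.norm_sub_tsum_le ?_ fun k => ?_
  · exact (((hc₀.mul_left (α * absMoment ψ 1)).add
      (hc₁.mul_left (π * K * β * a * absMoment ψ 2))).mul_left (a ^ 2)).congr fun k => by ring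
  · rw [← mul_sub, norm_mul, mul_left_comm (a ^ 2)]
    exact mul_le_mul_of_nonneg_left
      (norm_integral_harmonic_mul_conj_sub_le hψ hψm hA hA' hφ hφ'' ha (hAK b) k) (norm_nonneg _)

theorem norm_CWT_harmonicSeries_sub_le {ψ : ℝ → ℂ} (hψ : Integrable ψ)
    (hψm : ∀ n ≤ 2, Integrable fun x => |x| ^ n * ‖ψ x‖) {c : ℤ → ℂ}
    (hc : Summable fun k : ℤ => (1 + |(k : ℝ)|) * ‖c k‖) {A φ : ℝ → ℝ} {α β K : ℝ}
    (hA : Differentiable ℝ A) (hAK : ∀ t, |A t| ≤ K) (hA' : ∀ t, |deriv A t| ≤ α)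
    (hφ : ContDiff ℝ 2 φ) (hφ'' : ∀ t, |deriv (deriv φ) t| ≤ β) {f : ℝ → ℂ}
    (hf : ∀ t, f t = A t * ∑' k : ℤ, c k * Complex.exp (2 * π * Complex.I * ↑(k * φ t)))
    {a : ℝ} (ha : 0 < a) (b : ℝ) :
    ‖CWT ψ f a b - √a * ∑' k : ℤ, c k * (A b * Complex.exp (2 * π * Complex.I * ↑(k * φ b)) *
          conj (𝓕 ψ (a * (k * deriv φ b))))‖ ≤
      √a ^ 3 * ∑' k : ℤ, ‖c k‖ *
        (α * absMoment ψ 1 + π * K * (|(k : ℝ)| * β) * a * absMoment ψ 2) := by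
  have hsqrt : ((√a : ℝ) : ℂ) * √a = a := by exact_mod_cast Real.mul_self_sqrt ha.le
  have hsqrt₀ : ((√a : ℝ) : ℂ) ≠ 0 := by exact_mod_cast (Real.sqrt_pos.2 ha).ne'
  have hmain : ((√a : ℝ) : ℂ) * ∑' k : ℤ, c k * (A b *
      Complex.exp (2 * π * Complex.I * ↑(k * φ b)) * conj (𝓕 ψ (a * (k * deriv φ b)))) =
      ((√a : ℝ) : ℂ)⁻¹ * ∑' k : ℤ, c k * (a * A b *
        Complex.exp (2 * π * Complex.I * ↑(k * φ b)) * conj (𝓕 ψ (a * (k * deriv φ b)))) := by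
    rw [← tsum_mul_left, ← tsum_mul_left]
    congr 1 with k
    rw [← hsqrt]
    field_simp
  calc _ = (√a)⁻¹ * ‖(∫ t : ℝ, f t * conj (ψ ((t - b) / a))) - ∑' k : ℤ, c k * (a * A b *
        Complex.exp (2 * π * Complex.I * ↑(k * φ b)) * conj (𝓕 ψ (a * (k * deriv φ b))))‖ := by
        rw [CWT, hmain, ← mul_sub, norm_mul, norm_inv, Complex.norm_real,
          Real.norm_of_nonneg (Real.sqrt_nonneg a)]
    _ ≤ (√a)⁻¹ * (a ^ 2 * ∑' k : ℤ, ‖c k‖ *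
        (α * absMoment ψ 1 + π * K * (|(k : ℝ)| * β) * a * absMoment ψ 2)) := by
        simp_rw [hf]
        gcongr
        exact norm_integral_harmonicSeries_mul_conj_sub_le hψ hψm hc hA hAK hA' hφ hφ'' ha b
    _ = _ := by
        rw [← mul_assoc]
        congr 1
        have hr : a = √a ^ 2 := (Real.sq_sqrt ha.le).symm
        set r := √a
        rw [hr]
        field_simp

theorem int_mul_notMem_Icc {Δ x : ℝ} (hΔ : Δ < 1 / 3) (hx : x ∈ Set.Icc (1 - Δ) (1 + Δ)) {k : ℤ}
    (hk : k ≠ 1) : k * x ∉ Set.Icc (1 - Δ) (1 + Δ) := by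
  rintro ⟨hlo, hhi⟩
  obtain ⟨hx₁, hx₂⟩ := hx
  rcases le_or_gt k 0 with hk₀ | hk₀
  · have : (k : ℝ) ≤ 0 := by exact_mod_cast hk₀
    nlinarith
  · have : (2 : ℝ) ≤ k := by exact_mod_cast (by omega : 2 ≤ k)
    nlinarith

theorem stmt12_general (ψ : SchwartzMap ℝ ℂ) (Δ : ℝ) (hΔ1 : Δ < 1 / 3)
    (hsupp : ∀ ξ : ℝ, ξ ∉ Set.Icc (1 - Δ) (1 + Δ) → FourierTransform.fourier (⇑ψ : ℝ → ℂ) ξ = 0)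
    (s : ℝ → ℝ)
    (shat : ℤ → ℂ)
    (hsum : Summable (fun k : ℤ => (1 + |(k : ℝ)|) * ‖shat k‖))
    (hs_fourier : ∀ t : ℝ,
      ((s t : ℝ) : ℂ) = ∑' k : ℤ, shat k * Complex.exp (Complex.I * (k : ℂ) * (t : ℂ)))
    (ε c₁ M₂ : ℝ) (hε : 0 < ε) (hc₁ : 0 < c₁)
    (A : ℝ → ℝ) (φ : ℝ → ℝ)
    (hA : ContDiff ℝ 1 A) (hAbd : BddAbove (Set.range A)) (hApos : ∀ t : ℝ, 0 < A t)
    (hφ : ContDiff ℝ 2 φ)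
    (hφ'lo : ∀ t : ℝ, c₁ ≤ deriv φ t) (hφ'hi : ∀ t : ℝ, deriv φ t ≤ M₂)
    (hA' : ∀ t : ℝ, |deriv A t| ≤ ε * deriv φ t)
    (hφ'' : ∀ t : ℝ, |deriv (deriv φ) t| ≤ ε * deriv φ t)
    (f : ℝ → ℂ)
    (hf : ∀ t : ℝ, f t = ((A t * s (2 * Real.pi * φ t) : ℝ) : ℂ))
    (I₁ I₂ Asup : ℝ)
    (hI₁ : I₁ = ∫ x : ℝ, |x| * ‖ψ x‖) (hI₂ : I₂ = ∫ x : ℝ, x ^ 2 * ‖ψ x‖)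
    (hAsup : Asup = sSup (Set.range A)) :
    ∀ b : ℝ, ∀ a : ℝ,
      (1 - Δ) / deriv φ b ≤ a → a ≤ (1 + Δ) / deriv φ b →
      ‖CWT (⇑ψ) f a b -
          shat 1 * (A b : ℂ) * Complex.exp (2 * Real.pi * Complex.I * φ b) *
            ((Real.sqrt a : ℝ) : ℂ) *
            (starRingEnd ℂ) (FourierTransform.fourier (⇑ψ : ℝ → ℂ) (a * deriv φ b))‖ ≤
        ε * M₂ * Real.sqrt a ^ 3 *
          ∑' k : ℤ, ‖shat k‖ * (I₁ + Real.pi * |(k : ℝ)| * Asup * a * I₂) := by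
  intro b a ha₁ ha₂
  have hc : 0 < deriv φ b := hc₁.trans_le (hφ'lo b)
  have ha : 0 < a := (div_pos (by linarith) hc).trans_le ha₁
  have hac : a * deriv φ b ∈ Set.Icc (1 - Δ) (1 + Δ) :=
    ⟨(div_le_iff₀ hc).1 ha₁, (le_div_iff₀ hc).1 ha₂⟩
  have hAK : ∀ t, |A t| ≤ Asup := fun t => by
    rw [abs_of_pos (hApos t), hAsup]; exact le_csSup hAbd ⟨t, rfl⟩
  have hεφ' : ∀ t, ε * deriv φ t ≤ ε * M₂ := fun t => by gcongr; exact hφ'hi t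
  have hsignal : ∀ t, f t = A t *
      ∑' k : ℤ, shat k * Complex.exp (2 * π * Complex.I * ↑(k * φ t)) := fun t => by
    rw [hf, Complex.ofReal_mul, hs_fourier]
    congr 2 with k
    push_cast
    ring_nf
  have hbound := norm_CWT_harmonicSeries_sub_le ψ.integrable
    (fun n _ => by simpa only [Real.norm_eq_abs] using ψ.integrable_pow_mul volume n) hsum
    (hA.differentiable one_ne_zero) hAK (fun t => (hA' t).trans (hεφ' t)) hφ
    (fun t => (hφ'' t).trans (hεφ' t)) hsignal ha b
  rw [tsum_eq_single 1 fun k hk => by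
    rw [mul_left_comm a, hsupp _ (int_mul_notMem_Icc hΔ1 hac hk), map_zero, mul_zero, mul_zero]]
    at hbound
  have hI : absMoment ψ 1 = I₁ ∧ absMoment ψ 2 = I₂ := by
    simp only [absMoment, hI₁, hI₂, pow_one, sq_abs, and_self]
  simp only [hI.1, hI.2, Int.cast_one, one_mul] at hbound
  calc _ = _ := by congr 2; ring
    _ ≤ _ := hbound
    _ = _ := by rw [← tsum_mul_left, ← tsum_mul_left]; congr 1 with k; ring

theorem stmt12 (ψ : SchwartzMap ℝ ℂ) (Δ : ℝ) (hΔ0 : 0 < Δ) (hΔ1 : Δ < 1 / 3)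
    (hsupp : ∀ ξ : ℝ, ξ ∉ Set.Icc (1 - Δ) (1 + Δ) → FourierTransform.fourier (⇑ψ : ℝ → ℂ) ξ = 0)
    (s : ℝ → ℝ) (hs_cont : Continuous s)
    (hs_per : ∀ t : ℝ, s (t + 2 * Real.pi) = s t)
    (shat : ℤ → ℂ)
    (hsum : Summable (fun k : ℤ => (1 + |(k : ℝ)|) * ‖shat k‖))
    (hs_fourier : ∀ t : ℝ,
      ((s t : ℝ) : ℂ) = ∑' k : ℤ, shat k * Complex.exp (Complex.I * (k : ℂ) * (t : ℂ)))
    (ε c₁ M₂ : ℝ) (hε : 0 < ε) (hc₁ : 0 < c₁) (hc₁M₂ : c₁ ≤ M₂)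
    (A : ℝ → ℝ) (φ : ℝ → ℝ)
    (hA : ContDiff ℝ 1 A) (hAbd : BddAbove (Set.range A)) (hApos : ∀ t : ℝ, 0 < A t)
    (hφ : ContDiff ℝ 2 φ)
    (hφ'lo : ∀ t : ℝ, c₁ ≤ deriv φ t) (hφ'hi : ∀ t : ℝ, deriv φ t ≤ M₂)
    (hA' : ∀ t : ℝ, |deriv A t| ≤ ε * deriv φ t)
    (hφ'' : ∀ t : ℝ, |deriv (deriv φ) t| ≤ ε * deriv φ t)
    (f : ℝ → ℂ)
    (hf : ∀ t : ℝ, f t = ((A t * s (2 * Real.pi * φ t) : ℝ) : ℂ))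
    (I₁ I₂ Asup : ℝ)
    (hI₁ : I₁ = ∫ x : ℝ, |x| * ‖ψ x‖) (hI₂ : I₂ = ∫ x : ℝ, x ^ 2 * ‖ψ x‖)
    (hAsup : Asup = sSup (Set.range A)) :
    ∀ b : ℝ, ∀ a : ℝ,
      (1 - Δ) / deriv φ b ≤ a → a ≤ (1 + Δ) / deriv φ b →
      ‖CWT (⇑ψ) f a b -
          shat 1 * (A b : ℂ) * Complex.exp (2 * Real.pi * Complex.I * φ b) *
            ((Real.sqrt a : ℝ) : ℂ) *
            (starRingEnd ℂ) (FourierTransform.fourier (⇑ψ : ℝ → ℂ) (a * deriv φ b))‖ ≤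
        ε * M₂ * Real.sqrt a ^ 3 *
          ∑' k : ℤ, ‖shat k‖ * (I₁ + Real.pi * |(k : ℝ)| * Asup * a * I₂) :=
  stmt12_general ψ Δ hΔ1 hsupp s shat hsum hs_fourier ε c₁ M₂ hε hc₁ A φ hA hAbd hApos hφ hφ'lo
    hφ'hi hA' hφ'' f hf I₁ I₂ Asup hI₁ hI₂ hAsup
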